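/- Under the Setup, suppose the checks pass at every vertex x ∈ {1, …, n}. If {u, v} is an edge of G with u < v such that v is the largest neighbor of u in G and u is the smallest neighbor of v in G (a maximal edge), then I(u) = I(v). -/
import Mathlib


/-- The Setup: a graph on `{0, 1, …, n+1}` (modelled as `Fin (n+2)`) containing the
path `0–1–⋯–(n+1)`, the edge `{0, n+1}`, and whose every other edge has both
endpoints in `{1, …, n}`. -/
def SetupGraph (n : ℕ) (G : SimpleGraph (Fin (n + 2))) : Prop :=
  (∀ i : Fin (n + 2), ∀ _hi : (i : ℕ) ≤ n, G.Adj i ⟨(i : ℕ) + 1, by omega⟩) ∧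
  G.Adj ⟨0, by omega⟩ ⟨n + 1, by omega⟩ ∧
  (∀ u v : Fin (n + 2), G.Adj u v →
    ((u : ℕ) + 1 = (v : ℕ)) ∨ ((v : ℕ) + 1 = (u : ℕ)) ∨
    ((u : ℕ) = 0 ∧ (v : ℕ) = n + 1) ∨ ((v : ℕ) = 0 ∧ (u : ℕ) = n + 1) ∨
    (1 ≤ (u : ℕ) ∧ (u : ℕ) ≤ n ∧ 1 ≤ (v : ℕ) ∧ (v : ℕ) ≤ n))

/-- The checks of the verification algorithm pass at vertex `x ∈ {1, …, n}`,
where `I x = (a, b)` is the interval certificate of `x`. -/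
def ChecksPassAt (n : ℕ) (G : SimpleGraph (Fin (n + 2))) (I : Fin (n + 2) → ℤ × ℤ)
    (x : Fin (n + 2)) : Prop :=
  -- (i) `a < x < b` and all neighbors lie in `[a, b]`
  ((I x).1 < ((x : ℕ) : ℤ) ∧ ((x : ℕ) : ℤ) < (I x).2) ∧
  (∀ y, G.Adj x y → (I x).1 ≤ ((y : ℕ) : ℤ) ∧ ((y : ℕ) : ℤ) ≤ (I x).2) ∧
  -- (ii) consecutive larger neighbors `y < z`: `I y = (x, z)`
  (∀ y z, G.Adj x y → G.Adj x z → x < y → y < z →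
    (∀ w, G.Adj x w → ¬(y < w ∧ w < z)) → I y = (((x : ℕ) : ℤ), ((z : ℕ) : ℤ))) ∧
  -- (iii) consecutive smaller neighbors `y < z`: `I z = (y, x)`
  (∀ y z, G.Adj x y → G.Adj x z → y < z → z < x →
    (∀ w, G.Adj x w → ¬(y < w ∧ w < z)) → I z = (((y : ℕ) : ℤ), ((x : ℕ) : ℤ))) ∧
  -- (iv) if the largest neighbor `y` satisfies `y < b` then `I y = (a, b)`
  (∀ y, G.Adj x y → x < y → (∀ z, G.Adj x z → z ≤ y) →
    ((y : ℕ) : ℤ) < (I x).2 → I y = I x) ∧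
  -- (v) if the smallest neighbor `y` satisfies `a < y` then `I y = (a, b)`
  (∀ y, G.Adj x y → y < x → (∀ z, G.Adj x z → y ≤ z) →
    (I x).1 < ((y : ℕ) : ℤ) → I y = I x) ∧
  -- (vi) neighbors `y` whose interval has `x` as an endpoint
  (∀ y, G.Adj x y →
    ((I y).1 = ((x : ℕ) : ℤ) →
      (∃ d : Fin (n + 2), ((d : ℕ) : ℤ) = (I y).2 ∧ G.Adj x d) ∧
      (I x).1 ≤ (I y).1 ∧ (I y).2 ≤ (I x).2 ∧ I y ≠ I x) ∧
    ((I y).2 = ((x : ℕ) : ℤ) →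
      (∃ c : Fin (n + 2), ((c : ℕ) : ℤ) = (I y).1 ∧ G.Adj c x) ∧
      (I x).1 ≤ (I y).1 ∧ (I y).2 ≤ (I x).2 ∧ I y ≠ I x))


/-- If the checks pass everywhere and `{u, v}` is a maximal edge (`v` is the largest
neighbor of `u` and `u` is the smallest neighbor of `v`), then `I u = I v`. -/
theorem maximal_edge_same_interval (n : ℕ) (hn : 1 ≤ n)
    (G : SimpleGraph (Fin (n + 2))) (hG : SetupGraph n G)
    (I : Fin (n + 2) → ℤ × ℤ)
    (hI0 : I ⟨0, by omega⟩ = (-1, (n : ℤ) + 2))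
    (hIn : I ⟨n + 1, by omega⟩ = (-1, (n : ℤ) + 2))
    (hchecks : ∀ x : Fin (n + 2), 1 ≤ (x : ℕ) → (x : ℕ) ≤ n → ChecksPassAt n G I x)
    (u v : Fin (n + 2)) (huv : G.Adj u v) (hlt : u < v)
    (hmax : ∀ w, G.Adj u w → w ≤ v) (hminv : ∀ w, G.Adj v w → u ≤ w) :
    I u = I v := by
  by_cases hu0 : (u : ℕ) = 0
  · have hun : u = ⟨0, by omega⟩ := Fin.ext hu0
    have hadj : G.Adj u ⟨n + 1, by omega⟩ := by rw [hun]; exact hG.2.1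
    have hle : n + 1 ≤ (v : ℕ) := Fin.le_def.mp (hmax _ hadj)
    have hvn : v = ⟨n + 1, by omega⟩ := Fin.ext (show (v : ℕ) = n + 1 by omega)
    rw [hun, hvn, hI0, hIn]
  · have hu1 : 1 ≤ (u : ℕ) := by omega
    have hltv := Fin.lt_def.mp hlt
    have hvn : (v : ℕ) ≤ n := by
      by_contra h
      have hv : v = ⟨n + 1, Nat.lt_succ_self _⟩ := Fin.ext (show (v : ℕ) = n + 1 by omega)
      subst hv
      have h0 : (u : ℕ) ≤ 0 := Fin.le_def.mp (hminv ⟨0, by omega⟩ hG.2.1.symm)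
      omega
    have hun : (u : ℕ) ≤ n := by omega
    have hv1 : 1 ≤ (v : ℕ) := by omega
    obtain ⟨⟨ha, hb⟩, hnb, _, _, hiv, hvv, hvi⟩ := hchecks u hu1 hun
    obtain ⟨⟨ha', hb'⟩, hnb', _, _, hiv', hvv', hvi'⟩ := hchecks v hv1 hvn
    by_cases h1 : ((v : ℕ) : ℤ) < (I u).2
    · exact (hiv v huv hlt hmax h1).symm
    by_cases h2 : (I v).1 < ((u : ℕ) : ℤ)
    · exact hvv' u huv.symm hlt hminv h2
    have he2 : (I u).2 = ((v : ℕ) : ℤ) := le_antisymm (not_lt.mp h1) (hnb v huv).2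
    have he1 : (I v).1 = ((u : ℕ) : ℤ) := le_antisymm (hnb' u huv.symm).1 (not_lt.mp h2)
    obtain ⟨_, hA, hB, _⟩ := (hvi v huv).1 he1
    obtain ⟨_, hA', hB', _⟩ := (hvi' u huv.symm).2 he2
    exact Prod.ext (le_antisymm hA hA') (le_antisymm hB' hB)
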